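/- arXiv:1509.00143 — 4 statements merged into one kernel-verified Lean document; each statement's English description precedes it below -/
import Mathlib

section
/- Let F be a pure 1-dimensional sheaf on a smooth surface X supported (set-theoretically) on an integral curve C, annihilated by δ_C^l but not δ_C^{l−1}, where δ_C is the defining equation of C. Then F admits a filtration 0 = F₀ ⊊ F₁ ⊊ ... ⊊ F_l = F whose factors Q_i = F_i/F_{i−1} are torsion-free O_C-modules, and multiplication by δ_C induces injections Q_i(−C) ↪ Q_{i−1} for 2 ≤ i ≤ l. -/
/-- Let `F` be a pure 1-dimensional sheaf on a smooth surface `X`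
supported set-theoretically on an integral curve `C` (with irreducible defining equation
`δ_C`), annihilated by `δ_C^l` but not by `δ_C^{l−1}`.  Then `F` admits the (lower)
filtration `0 = F₀ ⊊ F₁ ⊊ ... ⊊ F_l = F` with `F_i = {annihilators of δ_C^i}`, whose
factors `Q_i = F_i/F_{i−1}` are torsion-free `O_C`-modules, and multiplication by `δ_C`
induces injections `Q_i(−C) ↪ Q_{i−1}` for `2 ≤ i ≤ l`.

Model (local/algebraic): `R` is the coordinate ring of an affine chart of `X` (a domain),
`δ` the prime element cutting out `C`, `M` the module of sections of `F`.  Purity of `F`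
with support on multiples of `C` is encoded by `hpure`: the annihilator of any nonzero
section has radical contained in `(δ)`.  Torsion-freeness of `Q_i` over `O_C = R/(δ)` and
injectivity of the multiplication map are stated element-wise on the filtration. -/
theorem lower_filtration_nonreduced_support
    {R : Type*} [CommRing R] [IsDomain R] (δ : R) (hδ : Prime δ)
    {M : Type*} [AddCommGroup M] [Module R M]
    (l : ℕ) (hl : 1 ≤ l)
    (hann : ∀ x : M, δ ^ l • x = 0)
    (hnot : ∃ x : M, δ ^ (l - 1) • x ≠ 0)
    (hpure : ∀ x : M, x ≠ 0 → ∀ r : R, r • x = 0 → ∃ n : ℕ, r ^ n ∈ Ideal.span {δ})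
    (F : ℕ → Submodule R M)
    (hF : ∀ i, F i = LinearMap.ker ((δ ^ i) • (LinearMap.id : M →ₗ[R] M))) :
    F 0 = ⊥ ∧ F l = ⊤ ∧
    (∀ i, i < l → F i < F (i + 1)) ∧
    -- each factor Q_i = F_i/F_{i−1} is a torsion-free O_C-module:
    (∀ i, 1 ≤ i → i ≤ l → ∀ x ∈ F i, ∀ r : R, r ∉ Ideal.span {δ} →
      r • x ∈ F (i - 1) → x ∈ F (i - 1)) ∧
    -- multiplication by δ_C induces injections Q_i(−C) ↪ Q_{i−1}:
    (∀ i, 2 ≤ i → i ≤ l → ∀ x ∈ F i, (δ • x ∈ F (i - 1)) ∧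
      (δ • x ∈ F (i - 2) → x ∈ F (i - 1))) := by
 
  have hmem : ∀ (i : ℕ) (x : M), x ∈ F i ↔ δ ^ i • x = 0 := by
    intro i x
    rw [hF]
    simp [LinearMap.mem_ker]
  refine ⟨?_, ?_, ?_, ?_, ?_⟩
  · ext x; simp [hmem]
  · ext x; simp [hmem, hann x]
  · intro i hi
    rw [lt_iff_le_and_ne]
    constructor
    · intro x hx
      rw [hmem] at hx ⊢
      rw [pow_succ, mul_comm, mul_smul, hx, smul_zero]
    · intro heq
      obtain ⟨x₀, hx₀⟩ := hnot
      have hy : (δ ^ (l - 1 - i) • x₀) ∈ F (i + 1) := by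
        rw [hmem, smul_smul, ← pow_add]
        have : i + 1 + (l - 1 - i) = l := by omega
        rw [this]; exact hann x₀
      rw [← heq, hmem, smul_smul, ← pow_add] at hy
      have : i + (l - 1 - i) = l - 1 := by omega
      rw [this] at hy
      exact hx₀ hy
  · intro i h1 hil x hx r hr hrx
    rw [hmem] at hrx ⊢
    by_contra hz
    obtain ⟨n, hn⟩ := hpure _ hz r (by rw [smul_comm]; exact hrx)
    rw [Ideal.mem_span_singleton] at hn
    exact hr (Ideal.mem_span_singleton.mpr (hδ.dvd_of_dvd_pow hn))
  · intro i h2 hil x hx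
    rw [hmem] at hx
    constructor
    · rw [hmem, smul_smul, ← pow_succ]
      have : i - 1 + 1 = i := by omega
      rw [this]; exact hx
    · intro h
      rw [hmem, smul_smul, ← pow_succ] at h
      rw [hmem]
      have : i - 1 = i - 2 + 1 := by omega
      rw [this]; exact h
end

section
/- Let F be a pure 1-dimensional sheaf on a smooth surface X with reduced support an integral curve C, annihilated by δ_C^m but not δ_C^{m−1}. Setting F^{m−1} = ker(F → F ⊗ O_C) and iterating, F admits a filtration 0 = F⁰ ⊊ F¹ ⊊ ... ⊊ F^m = F with factors R_i = F^i/F^{i−1} that are O_C-modules, together with surjections R_i(−C) ↠ R_{i−1} for 2 ≤ i ≤ m induced by multiplication by δ_C. -/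
/-- Let `F` be a pure 1-dimensional sheaf on a smooth surface `X` with
reduced support an integral curve `C` (defining equation `δ_C`), annihilated by `δ_C^m`
but not by `δ_C^{m−1}`.  Setting `F^{m−1} = ker(F → F ⊗ O_C) = δ_C·F` and iterating,
`F` admits the (upper) filtration `0 = F⁰ ⊊ F¹ ⊊ ... ⊊ F^m = F` with
`F^i = δ_C^{m−i}·F`, whose factors `R_i = F^i/F^{i−1}` are `O_C`-modules, together with
surjections `R_i(−C) ↠ R_{i−1}` for `2 ≤ i ≤ m` induced by multiplication by `δ_C`.

Model (local/algebraic): `R` a domain, `δ` the prime element cutting out `C`, `M` the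
module of sections of `F`; `Fup i = δ^{m−i}M`.  That each `R_i` is an `O_C`-module and
that multiplication by `δ` is surjective from `R_i(−C)` onto `R_{i−1}` are stated
element-wise. -/
theorem upper_filtration_nonreduced_support
    {R : Type*} [CommRing R] [IsDomain R] (δ : R) (hδ : Prime δ)
    {M : Type*} [AddCommGroup M] [Module R M]
    (m : ℕ) (hm : 1 ≤ m)
    (hann : ∀ x : M, δ ^ m • x = 0)
    (hnot : ∃ x : M, δ ^ (m - 1) • x ≠ 0)
    (hpure : ∀ x : M, x ≠ 0 → ∀ r : R, r • x = 0 → ∃ n : ℕ, r ^ n ∈ Ideal.span {δ})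
    (Fup : ℕ → Submodule R M)
    (hFup : ∀ i, Fup i = LinearMap.range ((δ ^ (m - i)) • (LinearMap.id : M →ₗ[R] M))) :
    Fup 0 = ⊥ ∧ Fup m = ⊤ ∧
    (∀ i, i < m → Fup i < Fup (i + 1)) ∧
    -- each factor R_i = F^i/F^{i−1} is an O_C-module (δ_C kills it):
    (∀ i, 1 ≤ i → i ≤ m → ∀ x ∈ Fup i, δ • x ∈ Fup (i - 1)) ∧
    -- multiplication by δ_C induces surjections R_i(−C) ↠ R_{i−1}:
    (∀ i, 1 ≤ i → i ≤ m → ∀ y ∈ Fup (i - 1), ∃ x ∈ Fup i, δ • x = y) := by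
  have hmem : ∀ i (x : M), x ∈ Fup i ↔ ∃ y : M, δ ^ (m - i) • y = x := by
    intro i x
    rw [hFup i]
    constructor
    · rintro ⟨y, rfl⟩; exact ⟨y, rfl⟩
    · rintro ⟨y, rfl⟩; exact ⟨y, rfl⟩
  refine ⟨?_, ?_, ?_, ?_, ?_⟩
  · ext x
    rw [hmem]
    simp only [Nat.sub_zero, Submodule.mem_bot]
    constructor
    · rintro ⟨y, rfl⟩; exact hann y
    · rintro rfl; exact ⟨0, smul_zero _⟩
  · ext x
    rw [hmem]
    simp only [Nat.sub_self, pow_zero, one_smul, Submodule.mem_top, iff_true]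
    exact ⟨x, rfl⟩
  · intro i hi
    constructor
    · intro x hx
      rw [hmem] at hx ⊢
      obtain ⟨y, rfl⟩ := hx
      refine ⟨δ • y, ?_⟩
      rw [smul_smul, ← pow_succ]
      congr 2
      omega
    · intro hle
      obtain ⟨x0, hx0⟩ := hnot
      apply hx0
      -- from Fup (i+1) ≤ Fup i, deduce δ^(m-i-1)M ⊆ δ^(m-i)M, iterate
      have key : ∀ k : ℕ, ∀ x : M, ∃ y : M, δ ^ (m - i - 1) • x = δ ^ (m - i - 1 + k) • y := by
        intro k
        induction k with
        | zero => intro x; exact ⟨x, by rw [Nat.add_zero]⟩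
        | succ k ih =>
          intro x
          have hx : (δ ^ (m - (i+1)) • x : M) ∈ Fup i := by
            apply hle
            rw [hmem]
            exact ⟨x, rfl⟩
          rw [hmem] at hx
          obtain ⟨z, hz⟩ := hx
          obtain ⟨w, hw⟩ := ih z
          refine ⟨w, ?_⟩
          have h1 : m - i = (m - i - 1) + 1 := by omega
          have h2 : m - (i+1) = m - i - 1 := by omega
          rw [h2] at hz
          have hp : (δ:R) ^ (m - i) = δ * δ ^ (m - i - 1) := by
            conv_lhs => rw [h1]
            rw [pow_succ, mul_comm]
          have hp2 : (δ:R) ^ (m - i - 1 + (k+1)) = δ * δ ^ (m - i - 1 + k) := by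
            have he : m - i - 1 + (k+1) = (m - i - 1 + k) + 1 := by omega
            rw [he, pow_succ, mul_comm]
          calc δ ^ (m - i - 1) • x = δ ^ (m - i) • z := hz.symm
            _ = δ • δ ^ (m - i - 1) • z := by rw [hp, mul_smul]
            _ = δ • δ ^ (m - i - 1 + k) • w := by rw [hw]
            _ = δ ^ (m - i - 1 + (k+1)) • w := by rw [hp2, mul_smul]
      obtain ⟨y, hy⟩ := key (i + 1) x0
      have hadd : m - i - 1 + (i + 1) = m := by omega
      rw [hadd] at hy
      have : δ ^ (m - i - 1) • x0 = 0 := by rw [hy, hann]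
      have h3 : m - 1 = i + (m - i - 1) := by omega
      rw [h3, pow_add, mul_smul, this, smul_zero]
  · intro i hi1 him x hx
    rw [hmem] at hx ⊢
    obtain ⟨y, rfl⟩ := hx
    refine ⟨y, ?_⟩
    rw [smul_smul, ← pow_succ']
    congr 2
    omega
  · intro i hi1 him y hy
    rw [hmem] at hy
    obtain ⟨z, rfl⟩ := hy
    refine ⟨δ ^ (m - i) • z, ?_, ?_⟩
    · rw [hmem]; exact ⟨z, rfl⟩
    · rw [smul_smul, ← pow_succ']
      congr 2
      omega
end

section
/- Let F be a pure 1-dimensional sheaf on a smooth surface X with support C = C₁ ∪ C₂ a reducible curve such that C₁ ∩ C₂ is 0-dimensional. Let F_i^{tf} be the quotient of F|_{C_i} by its maximal 0-dimensional subsheaf. Then there are exact sequences 0 → F₁^{tf}(−C₂) → F → F|_{C₂} → 0 and 0 → F₂^{tf}(−C₁) → F → F|_{C₁} → 0. -/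
/-!
Multiplication by `δ₂` maps `M` onto `δ₂M` with kernel `K`, so it suffices to show that `K` is
the preimage in `M` of the largest finite-length submodule `T` of `M/δ₁M`. Since `δ₁δ₂` kills
`M`, multiplication by `δ₂` factors through `M/δ₁M → M`; it kills `T` because `M` is pure.
Conversely, if `δ₂x = 0` then the class of `x` in `M/δ₁M` is killed by `(δ₁, δ₂)`, so it spans
a quotient of the finite-length module `R/(δ₁, δ₂)` and lies in `T`.
-/

open Submodule LinearMap Ideal

section FiniteLength

variable {R : Type*} [Ring R] {N M : Type*} [AddCommGroup N] [Module R N]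
  [AddCommGroup M] [Module R M]

lemma IsFiniteLength.map {S : Submodule R N} (hS : IsFiniteLength R S) (g : N →ₗ[R] M) :
    IsFiniteLength R (S.map g) :=
  hS.of_surjective (g.submoduleMap_surjective S)

lemma sSup_isFiniteLength_le_ker (hpure : ∀ P : Submodule R M, IsFiniteLength R P → P = ⊥)
    (g : N →ₗ[R] M) : sSup {T : Submodule R N | IsFiniteLength R T} ≤ ker g :=
  sSup_le fun _ hS => le_ker_iff_map.mpr (hpure _ (IsFiniteLength.map hS g))

lemma isFiniteLength_span_singleton {I : Ideal R} (hI : IsFiniteLength R (R ⧸ I)) {y : N}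
    (hy : I ≤ torsionOf R N y) : IsFiniteLength R (R ∙ y) :=
  (hI.of_surjective (factor_surjective hy)).of_surjective
    (quotTorsionOfEquivSpanSingleton R N y).surjective

end FiniteLength

section ReducibleSupport

variable {R : Type*} [CommRing R] {M : Type*} [AddCommGroup M] [Module R M] {δ₁ δ₂ : R}

lemma ker_smul_eq_comap_sSup_isFiniteLength
    (h0dim : IsFiniteLength R (R ⧸ Ideal.span {δ₁, δ₂}))
    (hsupp : ∀ x : M, (δ₁ * δ₂) • x = 0)
    (hpure : ∀ N : Submodule R M, IsFiniteLength R N → N = ⊥) :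
    ker (δ₂ • LinearMap.id : M →ₗ[R] M) =
      (sSup {T : Submodule R (M ⧸ range (δ₁ • LinearMap.id : M →ₗ[R] M)) |
        IsFiniteLength R T}).comap (range (δ₁ • LinearMap.id : M →ₗ[R] M)).mkQ := by
  set A := range (δ₁ • LinearMap.id : M →ₗ[R] M)
  have hA : A ≤ ker (δ₂ • LinearMap.id : M →ₗ[R] M) := by
    rintro _ ⟨x, rfl⟩
    simpa [smul_smul, mul_comm] using hsupp x
  apply le_antisymm
  · intro x hx
    have hδ₂ : δ₂ • x = 0 := by simpa using hx
    have hann : Ideal.span {δ₁, δ₂} ≤ torsionOf R (M ⧸ A) (A.mkQ x) := by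
      rw [Ideal.span_le, Set.insert_subset_iff, Set.singleton_subset_iff]
      refine ⟨?_, ?_⟩ <;>
        simp only [SetLike.mem_coe, mem_torsionOf_iff, mkQ_apply, ← Quotient.mk_smul,
          Quotient.mk_eq_zero]
      · exact ⟨x, rfl⟩
      · exact hδ₂ ▸ A.zero_mem
    have hspan : (R ∙ A.mkQ x) ≤ sSup {T : Submodule R (M ⧸ A) | IsFiniteLength R T} :=
      le_sSup (isFiniteLength_span_singleton h0dim hann)
    exact hspan (mem_span_singleton_self _)
  · intro x hx
    simpa using sSup_isFiniteLength_le_ker hpure (A.liftQ _ hA) hx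

lemma nonempty_range_smul_equiv_quotient_sSup_isFiniteLength
    (h0dim : IsFiniteLength R (R ⧸ Ideal.span {δ₁, δ₂}))
    (hsupp : ∀ x : M, (δ₁ * δ₂) • x = 0)
    (hpure : ∀ N : Submodule R M, IsFiniteLength R N → N = ⊥) :
    Nonempty (range (δ₂ • LinearMap.id : M →ₗ[R] M) ≃ₗ[R]
      (M ⧸ range (δ₁ • LinearMap.id : M →ₗ[R] M)) ⧸
        sSup {T : Submodule R (M ⧸ range (δ₁ • LinearMap.id : M →ₗ[R] M)) |
          IsFiniteLength R T}) := by
  set A := range (δ₁ • LinearMap.id : M →ₗ[R] M)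
  set T := sSup {T : Submodule R (M ⧸ A) | IsFiniteLength R T}
  have hker : ker (δ₂ • LinearMap.id : M →ₗ[R] M) = ker (T.mkQ ∘ₗ A.mkQ) := by
    rw [ker_comp, ker_mkQ]
    exact ker_smul_eq_comap_sSup_isFiniteLength h0dim hsupp hpure
  exact ⟨(quotKerEquivRange _).symm ≪≫ₗ quotEquivOfEq _ _ hker ≪≫ₗ
    (T.mkQ ∘ₗ A.mkQ).quotKerEquivOfSurjective (T.mkQ_surjective.comp A.mkQ_surjective)⟩

end ReducibleSupport

/-- Let `F` be a pure 1-dimensional sheaf on a smooth surface `X` with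
support `C = C₁ ∪ C₂` a reducible curve such that `C₁ ∩ C₂` is 0-dimensional.  Let
`F_i^{tf}` be the quotient of `F|_{C_i}` by its maximal 0-dimensional subsheaf.  Then
there are exact sequences `0 → F₁^{tf}(−C₂) → F → F|_{C₂} → 0` and
`0 → F₂^{tf}(−C₁) → F → F|_{C₁} → 0`.

Model (local/algebraic): `R` a ring, `δ₁, δ₂` cutting out `C₁, C₂`; the 0-dimensionality
of `C₁ ∩ C₂` is `IsFiniteLength R (R/(δ₁,δ₂))`; `M` is killed by `δ₁δ₂` (support on `C`)
and pure (no nonzero finite-length submodule).  `F|_{C_i} = M/δ_iM`, and the kernel of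
`M ↠ M/δ_iM` is `δ_iM`; the content of the two exact sequences is that (after the local
trivialization of the twist `O(−C_j)`) the subsheaf `δ₂M = ker(M → F|_{C₂})` is isomorphic
to `F₁^{tf}` = (`M/δ₁M` modulo its maximal finite-length submodule), and symmetrically. -/
theorem reducible_support_exact_sequences
    {R : Type*} [CommRing R] {M : Type*} [AddCommGroup M] [Module R M]
    (δ₁ δ₂ : R)
    (h0dim : IsFiniteLength R (R ⧸ Ideal.span {δ₁, δ₂}))
    (hsupp : ∀ x : M, (δ₁ * δ₂) • x = 0)
    (hpure : ∀ N : Submodule R M, IsFiniteLength R ↥N → N = ⊥) :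
    Nonempty
      ((↥(LinearMap.range (δ₂ • (LinearMap.id : M →ₗ[R] M)))) ≃ₗ[R]
        ((M ⧸ LinearMap.range (δ₁ • (LinearMap.id : M →ₗ[R] M))) ⧸
          sSup {T : Submodule R (M ⧸ LinearMap.range (δ₁ • (LinearMap.id : M →ₗ[R] M))) |
            IsFiniteLength R ↥T})) ∧
    Nonempty
      ((↥(LinearMap.range (δ₁ • (LinearMap.id : M →ₗ[R] M)))) ≃ₗ[R]
        ((M ⧸ LinearMap.range (δ₂ • (LinearMap.id : M →ₗ[R] M))) ⧸
          sSup {T : Submodule R (M ⧸ LinearMap.range (δ₂ • (LinearMap.id : M →ₗ[R] M))) |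
            IsFiniteLength R ↥T})) := by
  refine ⟨nonempty_range_smul_equiv_quotient_sSup_isFiniteLength h0dim hsupp hpure,
    nonempty_range_smul_equiv_quotient_sSup_isFiniteLength ?_ ?_ hpure⟩
  · rwa [Set.pair_comm]
  · simpa only [mul_comm] using hsupp
end

section
/- Let X = ℙ(O_{ℙ¹} ⊕ O_{ℙ¹}(e)) be a Hirzebruch surface with e ∈ {0,1}, with fiber class f and section class σ satisfying σ² = −e, f² = 0, σ.f = 1. For L = aσ + bf with a > 0 and b > ae, the quantity s_L = min over decompositions L = ∑ L_k into two or more effective nontrivial classes of ∑_{i<j} L_i.L_j equals min{e + (b − ae), a}. -/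
private def qf (e : ℤ) (u v : ℤ × ℤ) : ℤ := u.1 * v.2 + v.1 * u.2 - e * (u.1 * v.1)


lemma two_mul_pairsum (e : ℤ) (r : ℕ) (L : Fin r → ℤ × ℤ) :
    2 * ∑ p ∈ Finset.univ.filter (fun p : Fin r × Fin r => p.1 < p.2), qf e (L p.1) (L p.2)
      = (∑ i, ∑ j, qf e (L i) (L j)) - ∑ i, qf e (L i) (L i) := by
  classical
  set f : Fin r × Fin r → ℤ := fun p => qf e (L p.1) (L p.2) with hf
  have hfull : (∑ i, ∑ j, qf e (L i) (L j)) = ∑ p : Fin r × Fin r, f p := by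
    rw [← Finset.univ_product_univ, Finset.sum_product]
  have hsplit := Finset.sum_filter_add_sum_filter_not (Finset.univ : Finset (Fin r × Fin r))
    (fun p => p.1 < p.2) f
  have hsplit2 := Finset.sum_filter_add_sum_filter_not
    (Finset.univ.filter (fun p : Fin r × Fin r => ¬ p.1 < p.2)) (fun p => p.2 < p.1) f
  rw [Finset.filter_filter, Finset.filter_filter] at hsplit2
  have hgt : Finset.univ.filter (fun p : Fin r × Fin r => ¬ p.1 < p.2 ∧ p.2 < p.1)
      = Finset.univ.filter (fun p : Fin r × Fin r => p.2 < p.1) := by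
    ext p
    simp only [Finset.mem_filter, Finset.mem_univ, true_and]
    exact ⟨fun h => h.2, fun h => ⟨asymm h, h⟩⟩
  have hdiag : Finset.univ.filter (fun p : Fin r × Fin r => ¬ p.1 < p.2 ∧ ¬ p.2 < p.1)
      = Finset.univ.filter (fun p : Fin r × Fin r => p.1 = p.2) := by
    ext p
    simp only [Finset.mem_filter, Finset.mem_univ, true_and, not_lt]
    constructor
    · exact fun h => le_antisymm h.2 h.1
    · intro h; rw [h]; exact ⟨le_refl _, le_refl _⟩
  rw [hgt, hdiag] at hsplit2
  have hswap : ∑ p ∈ Finset.univ.filter (fun p : Fin r × Fin r => p.2 < p.1), f p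
      = ∑ p ∈ Finset.univ.filter (fun p : Fin r × Fin r => p.1 < p.2), f p := by
    apply Finset.sum_equiv (Equiv.prodComm (Fin r) (Fin r))
    · intro p; simp [Equiv.prodComm]
    · intro p _; simp only [hf, Equiv.prodComm_apply, Prod.fst_swap, Prod.snd_swap, qf]; ring
  have hdiagsum : ∑ p ∈ Finset.univ.filter (fun p : Fin r × Fin r => p.1 = p.2), f p
      = ∑ i, qf e (L i) (L i) := by
    apply Finset.sum_nbij' (fun p : Fin r × Fin r => p.1) (fun i => (i, i))
    · intro p _; exact Finset.mem_univ _
    · intro i _; simp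
    · intro p hp; simp only [Finset.mem_filter] at hp; ext <;> simp [hp.2]
    · intro i _; rfl
    · intro p hp; simp only [Finset.mem_filter] at hp
      simp only [hf]; rw [← hp.2]
  rw [hfull]
  rw [hswap, hdiagsum] at hsplit2
  linarith [hsplit, hsplit2]

lemma double_sum (e a b : ℤ) (r : ℕ) (L : Fin r → ℤ × ℤ) (h : (∑ k, L k) = (a, b)) :
    (∑ i, ∑ j, qf e (L i) (L j)) = 2 * a * b - e * (a * a) := by
  have hA : ∑ k, (L k).1 = a := by
    have := congrArg Prod.fst h; simpa [Prod.fst_sum] using this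
  have hB : ∑ k, (L k).2 = b := by
    have := congrArg Prod.snd h; simpa [Prod.snd_sum] using this
  have step : ∀ i : Fin r, ∑ j, qf e (L i) (L j)
      = (L i).1 * b + a * (L i).2 - e * ((L i).1 * a) := by
    intro i
    simp only [qf]
    rw [Finset.sum_sub_distrib, Finset.sum_add_distrib, ← Finset.mul_sum, ← Finset.sum_mul,
      ← Finset.mul_sum, ← Finset.mul_sum, hA, hB]
  rw [Finset.sum_congr rfl (fun i _ => step i)]
  rw [Finset.sum_sub_distrib, Finset.sum_add_distrib, ← Finset.sum_mul, ← Finset.mul_sum,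
    ← Finset.mul_sum, ← Finset.sum_mul, hA, hB]
  ring


lemma diag_sum_bound (e a b : ℤ) (he : e = 0 ∨ e = 1) (ha : 0 < a) (hb : a * e < b)
    (r : ℕ) (hr : 2 ≤ r) (L : Fin r → ℤ × ℤ)
    (hpos : ∀ k, 0 ≤ (L k).1 ∧ 0 ≤ (L k).2 ∧ L k ≠ (0, 0))
    (hA : ∑ k, (L k).1 = a) (hB : ∑ k, (L k).2 = b) :
    ∑ k, qf e (L k) (L k) ≤ 2 * a * b - e * (a * a) - 2 * min (e + (b - a * e)) a := by
  classical
  have he0 : 0 ≤ e := by rcases he with h | h <;> omega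
  have hne : (Finset.univ : Finset (Fin r)).Nonempty :=
    ⟨⟨0, by omega⟩, Finset.mem_univ _⟩
  obtain ⟨k₀, -, hmax⟩ := Finset.exists_max_image Finset.univ (fun k => (L k).1) hne
  set M := (L k₀).1 with hMdef
  have hM0 : 0 ≤ M := (hpos k₀).1
  have hMa : M ≤ a := by
    rw [← hA]
    exact Finset.single_le_sum (fun k _ => (hpos k).1) (Finset.mem_univ k₀)
  have herase : ∑ k ∈ Finset.univ.erase k₀, (L k).1 = a - M := by
    have h := Finset.add_sum_erase Finset.univ (fun k => (L k).1) (Finset.mem_univ k₀)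
    rw [hA] at h
    linarith
  by_cases hcase : M = a
  · -- the maximal part has first coordinate a; all others are fibers
    have hz : ∀ k, k ≠ k₀ → (L k).1 = 0 := by
      intro k hk
      have h0 : ∑ k ∈ Finset.univ.erase k₀, (L k).1 = 0 := by rw [herase, hcase]; ring
      exact (Finset.sum_eq_zero_iff_of_nonneg (fun k _ => (hpos k).1)).1 h0 k
        (Finset.mem_erase.2 ⟨hk, Finset.mem_univ k⟩)
    obtain ⟨k₁, -, hk₁⟩ := Finset.exists_mem_ne
      (by rw [Finset.card_fin]; omega) k₀
    have hb₁ : 1 ≤ (L k₁).2 := by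
      rcases hpos k₁ with ⟨-, h2, h3⟩
      by_contra hc
      push_neg at hc
      exact h3 (Prod.ext (hz k₁ hk₁) (le_antisymm (by omega) h2))
    have hbk0 : (L k₀).2 ≤ b - 1 := by
      have hsum := Finset.add_sum_erase Finset.univ (fun k => (L k).2) (Finset.mem_univ k₀)
      rw [hB] at hsum
      have h1 : (L k₁).2 ≤ ∑ k ∈ Finset.univ.erase k₀, (L k).2 :=
        Finset.single_le_sum (f := fun k => (L k).2) (fun k _ => (hpos k).2.1)
          (Finset.mem_erase.2 ⟨hk₁, Finset.mem_univ _⟩)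
      linarith
    have hsum0 : ∑ k, qf e (L k) (L k) = qf e (L k₀) (L k₀) :=
      Finset.sum_eq_single_of_mem k₀ (Finset.mem_univ _)
        (fun k _ hk => by simp [qf, hz k hk])
    have hmin : min (e + (b - a * e)) a ≤ a := min_le_right _ _
    rw [hsum0]
    simp only [qf]
    have hLa : (L k₀).1 = a := hcase
    rw [hLa]
    nlinarith [hbk0, hmin, ha, he0]
  · -- every part has first coordinate ≤ a - 1
    have hMa1 : M ≤ a - 1 := by omega
    have hub : ∑ k, ((L k).1 * (L k).2) ≤ M * b := by
      calc ∑ k, (L k).1 * (L k).2 ≤ ∑ k, M * (L k).2 :=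
            Finset.sum_le_sum (fun k _ =>
              mul_le_mul_of_nonneg_right (hmax k (Finset.mem_univ k)) (hpos k).2.1)
        _ = M * b := by rw [← Finset.mul_sum, hB]
    have hsq : ∀ x : ℤ, 0 ≤ x → x ≤ x * x := by
      intro x hx
      rcases hx.eq_or_lt with h | h
      · rw [← h]; norm_num
      · nlinarith
    have hlb : M * M + (a - M) ≤ ∑ k, (L k).1 * (L k).1 := by
      have h1 : ∑ k ∈ Finset.univ.erase k₀, (L k).1
          ≤ ∑ k ∈ Finset.univ.erase k₀, (L k).1 * (L k).1 :=
        Finset.sum_le_sum (fun k _ => hsq _ (hpos k).1)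
      have h2 := Finset.add_sum_erase Finset.univ (fun k => (L k).1 * (L k).1)
        (Finset.mem_univ k₀)
      rw [herase] at h1
      linarith
    have hmin : min (e + (b - a * e)) a ≤ e + (b - a * e) := min_le_left _ _
    have hqf : ∑ k, qf e (L k) (L k)
        = 2 * (∑ k, (L k).1 * (L k).2) - e * (∑ k, (L k).1 * (L k).1) := by
      simp only [qf]
      rw [Finset.sum_sub_distrib, Finset.sum_add_distrib, ← Finset.mul_sum]
      ring
    rw [hqf]
    rcases he with h | h
    · subst h
      have hb' : 0 < b := by simpa using hb
      nlinarith [hub, hmin, mul_nonneg (show (0:ℤ) ≤ a - 1 - M by omega) hb'.le]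
    · subst h
      have hb' : a < b := by simpa using hb
      nlinarith [hub, hlb, hmin,
        mul_nonneg (show (0:ℤ) ≤ a - 1 - M by omega)
          (show (0:ℤ) ≤ 2 * b - a - M + 2 by omega)]

/-- Let `X = ℙ(O_{ℙ¹} ⊕ O_{ℙ¹}(e))` be a Hirzebruch surface with
`e ∈ {0,1}`, fiber class `f` and section class `σ` with `σ² = −e`, `f² = 0`, `σ.f = 1`.
For `L = aσ + bf` with `a > 0` and `b > ae`, the quantity `s_L` (the minimum over
decompositions `L = ∑ L_k` into two or more effective nontrivial classes of
`∑_{i<j} L_i.L_j`) equals `min{e + (b − ae), a}`.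

Model: `Pic(X) = ℤ × ℤ` via `(a', b') ↔ a'σ + b'f`; `(a₁,b₁).(a₂,b₂) =
a₁b₂ + a₂b₁ − e·a₁a₂`; a class is effective nontrivial iff both coordinates are `≥ 0` and
it is nonzero.  The conclusion is stated as `IsLeast`. -/
theorem sL_hirzebruch (e a b : ℤ) (he : e = 0 ∨ e = 1) (ha : 0 < a) (hb : a * e < b) :
    IsLeast
      {s : ℤ | ∃ (r : ℕ) (Lk : Fin r → ℤ × ℤ), 2 ≤ r ∧
        (∀ k, 0 ≤ (Lk k).1 ∧ 0 ≤ (Lk k).2 ∧ Lk k ≠ (0, 0)) ∧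
        (∑ k, Lk k) = (a, b) ∧
        s = ∑ p ∈ Finset.univ.filter (fun p : Fin r × Fin r => p.1 < p.2),
              ((Lk p.1).1 * (Lk p.2).2 + (Lk p.2).1 * (Lk p.1).2
                - e * ((Lk p.1).1 * (Lk p.2).1))}
      (min (e + (b - a * e)) a) := by
  have he0 : 0 ≤ e := by rcases he with h | h <;> omega
  have hb1 : 1 ≤ b := by nlinarith
  have hfin2 : Finset.univ.filter (fun p : Fin 2 × Fin 2 => p.1 < p.2)
      = {((0 : Fin 2), (1 : Fin 2))} := by decide
  constructor
  · -- membership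
    rcases le_total (e + (b - a * e)) a with hle | hle
    · rw [min_eq_left hle]
      refine ⟨2, ![(1, 0), (a - 1, b)], le_refl 2, ?_, ?_, ?_⟩
      · intro k
        fin_cases k
        · refine ⟨by norm_num, by norm_num, by simp⟩
        · refine ⟨by simp; omega, by simp; omega, ?_⟩
          intro hEq
          simp [Prod.ext_iff] at hEq
          omega
      · rw [Fin.sum_univ_two]
        simp only [Matrix.cons_val_zero, Matrix.cons_val_one, Matrix.head_cons,
          Prod.mk_add_mk, Prod.mk.injEq]
        constructor <;> ring
      · rw [hfin2, Finset.sum_singleton]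
        simp only [Matrix.cons_val_zero, Matrix.cons_val_one, Matrix.head_cons]
        ring
    · rw [min_eq_right hle]
      refine ⟨2, ![(0, 1), (a, b - 1)], le_refl 2, ?_, ?_, ?_⟩
      · intro k
        fin_cases k
        · refine ⟨by norm_num, by norm_num, by simp⟩
        · refine ⟨by simp; omega, by simp; omega, ?_⟩
          intro hEq
          simp [Prod.ext_iff] at hEq
          omega
      · rw [Fin.sum_univ_two]
        simp only [Matrix.cons_val_zero, Matrix.cons_val_one, Matrix.head_cons,
          Prod.mk_add_mk, Prod.mk.injEq]
        constructor <;> ring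
      · rw [hfin2, Finset.sum_singleton]
        simp only [Matrix.cons_val_zero, Matrix.cons_val_one, Matrix.head_cons]
        ring
  · -- lower bound
    rintro s ⟨r, Lk, hr, hpos, hsum, hs_eq⟩
    have hA : ∑ k, (Lk k).1 = a := by
      have := congrArg Prod.fst hsum; simpa [Prod.fst_sum] using this
    have hB : ∑ k, (Lk k).2 = b := by
      have := congrArg Prod.snd hsum; simpa [Prod.snd_sum] using this
    have hid := two_mul_pairsum e r Lk
    have hds := double_sum e a b r Lk hsum
    have hkey := diag_sum_bound e a b he ha hb r hr Lk hpos hA hB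
    have hs2 : 2 * s = (∑ i, ∑ j, qf e (Lk i) (Lk j)) - ∑ i, qf e (Lk i) (Lk i) := by
      rw [hs_eq, ← hid]
      simp only [qf]
    rw [hds] at hs2
    linarith
end
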